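/- arXiv:1303.1225 — 3 statements merged into one kernel-verified Lean document; each statement's English description precedes it below -/
import Mathlib

section
/- Let θ ∈ [0,1) and let w ∈ V^⊥(θ). Then: (i) w is affine on [α,β], i.e. w(y) = (w(β) − w(α))(β − α)^{-1}(y − α) + w(α) for all y ∈ [α,β]; (ii) if θ ≠ 0 then (β − α)^{-1}(w(β) − w(α)) = (1 − e^{−2πiθ})^{-1}(α + (1 − β)e^{−2πiθ}) ∫_{Q₁} w(y) dy; (iii) if θ = 0 then ∫_{Q₁} w(y) dy = 0. -/
open MeasureTheory Real Set
open scoped ComplexConjugate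

noncomputable section

/-- `u ∈ H¹(0,1)` with (weak) derivative `u'`. -/
def IsH1 (u u' : ℝ → ℂ) : Prop :=
  MemLp u' 2 (volume.restrict (Ioo (0:ℝ) 1)) ∧
  ∀ x ∈ Icc (0:ℝ) 1, u x = u 0 + ∫ t in (0:ℝ)..x, u' t

/-- Membership in `V(θ)`: `θ`-quasiperiodicity together with vanishing of the
derivative a.e. on `Q₁ = (0,α) ∪ (β,1)`. -/
def MemV (α β θ : ℝ) (u u' : ℝ → ℂ) : Prop :=
  u 1 = Complex.exp (2 * Real.pi * Complex.I * θ) * u 0 ∧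
  ∀ᵐ y ∂volume, y ∈ Ioo (0:ℝ) α ∪ Ioo β 1 → u' y = 0

/-- The inner product `⟨u,φ⟩ = (∫_{Q₁} u) conj(∫_{Q₁} φ) + ∫₀¹ u' conj(φ')`. -/
def innerH (α β : ℝ) (u u' φ φ' : ℝ → ℂ) : ℂ :=
  (∫ y in Ioo (0:ℝ) α ∪ Ioo β 1, u y) * conj (∫ y in Ioo (0:ℝ) α ∪ Ioo β 1, φ y) +
    ∫ y in Ioo (0:ℝ) 1, u' y * conj (φ' y)

/-!
Test `w ⊥ V(θ)` against `φ = φ₀ + ∫₀ˣ φ'`, where `φ'` equals `p` on `(α, y)`, `q` on `(y, β)` and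
vanishes elsewhere; `φ ∈ V(θ)` as soon as `φ₀ + p (y - α) + q (β - y) = e^{2πiθ} φ₀`. Since
`∫₀¹ w' conj φ'` only sees the increments of `w` over `(α, y)` and `(y, β)`, orthogonality reads
`(∫_{Q₁} w) conj(φ₀ (α + (1 - β) e^{2πiθ})) + (w y - w α) conj p + (w β - w y) conj q = 0`.
With `φ₀ = 0` the difference quotients of `w` on `[α, y]` and `[y, β]` agree, so `w` is affine on
`[α, β]`. With `φ₀ = 1` and `p = q`, `φ` is `η(θ, ·)` and we get a linear relation between
`w β - w α` and `∫_{Q₁} w`, with coefficients `e^{-2πiθ} - 1` and `α + (1 - β) e^{-2πiθ}`. For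
`θ ∈ (0, 1)` the first is nonzero, which gives (ii); for `θ = 0` it vanishes while the second is
`α + 1 - β > 0`, which gives (iii).
-/

section IndicatorIntegrals

variable {ι : Type*} {l a b x : ℝ} (c : ℂ)

lemma intervalIntegral_indicator_Ioo_const_of_le_left (hlx : l ≤ x) (hxa : x ≤ a) :
    ∫ t in l..x, (Ioo a b).indicator (fun _ => c) t = 0 := by
  have hempty : Ioc l x ∩ Ioo a b = ∅ :=
    eq_empty_of_forall_notMem fun t ht => by linarith [ht.1.2, ht.2.1]
  rw [intervalIntegral.integral_of_le hlx, setIntegral_indicator measurableSet_Ioo, hempty,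
    Measure.restrict_empty, integral_zero_measure]

lemma intervalIntegral_indicator_Ioo_const_of_le (hla : l ≤ a) (hab : a ≤ b) (hbx : b ≤ x) :
    ∫ t in l..x, (Ioo a b).indicator (fun _ => c) t = (b - a) * c := by
  have hsub : Ioc l x ∩ Ioo a b = Ioo a b :=
    inter_eq_self_of_subset_right fun t ht => ⟨hla.trans_lt ht.1, ht.2.le.trans hbx⟩
  rw [intervalIntegral.integral_of_le (hla.trans (hab.trans hbx)),
    setIntegral_indicator measurableSet_Ioo, hsub, setIntegral_const,
    Real.volume_real_Ioo_of_le hab, Complex.real_smul]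
  push_cast
  ring

lemma integrable_indicator_Ioo_const : Integrable ((Ioo a b).indicator fun _ => c) :=
  (integrable_indicator_iff measurableSet_Ioo).2 (integrableOn_const measure_Ioo_lt_top.ne)

lemma mul_conj_indicator_const (s : Set ι) (f : ι → ℂ) (t : ι) :
    f t * conj (s.indicator (fun _ => c) t) = s.indicator (fun t => f t * conj c) t := by
  by_cases ht : t ∈ s <;> simp [ht]

end IndicatorIntegrals

def twoStep (α y β : ℝ) (p q : ℂ) (t : ℝ) : ℂ :=
  (Ioo α y).indicator (fun _ => p) t + (Ioo y β).indicator (fun _ => q) t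

namespace twoStep

variable {α y β l x : ℝ} {p q : ℂ}

lemma memLp_two {μ : Measure ℝ} [IsFiniteMeasure μ] : MemLp (twoStep α y β p q) 2 μ :=
  (memLp_indicator_const 2 measurableSet_Ioo p (Or.inr (measure_ne_top _ _))).add
    (memLp_indicator_const 2 measurableSet_Ioo q (Or.inr (measure_ne_top _ _)))

lemma intervalIntegral_of_le_left (hlx : l ≤ x) (hxα : x ≤ α) (hαy : α ≤ y) :
    ∫ t in l..x, twoStep α y β p q t = 0 := by
  simp only [twoStep]
  rw [intervalIntegral.integral_add (integrable_indicator_Ioo_const p).intervalIntegrable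
      (integrable_indicator_Ioo_const q).intervalIntegrable,
    intervalIntegral_indicator_Ioo_const_of_le_left p hlx hxα,
    intervalIntegral_indicator_Ioo_const_of_le_left q hlx (hxα.trans hαy), add_zero]

lemma intervalIntegral_of_le_right (hlα : l ≤ α) (hαy : α ≤ y) (hyβ : y ≤ β) (hβx : β ≤ x) :
    ∫ t in l..x, twoStep α y β p q t = p * (y - α) + q * (β - y) := by
  simp only [twoStep]
  rw [intervalIntegral.integral_add (integrable_indicator_Ioo_const p).intervalIntegrable
      (integrable_indicator_Ioo_const q).intervalIntegrable,
    intervalIntegral_indicator_Ioo_const_of_le p hlα hαy (hyβ.trans hβx),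
    intervalIntegral_indicator_Ioo_const_of_le q (hlα.trans hαy) hyβ hβx]
  ring

lemma eq_zero_of_notMem_Ioo (hαy : α ≤ y) (hyβ : y ≤ β) (hx : x ∉ Ioo α β) :
    twoStep α y β p q x = 0 := by
  have h₁ : x ∉ Ioo α y := fun h => hx ⟨h.1, h.2.trans_le hyβ⟩
  have h₂ : x ∉ Ioo y β := fun h => hx ⟨hαy.trans_lt h.1, h.2⟩
  rw [twoStep, indicator_of_notMem h₁, indicator_of_notMem h₂, add_zero]

end twoStep

namespace IsH1

variable {u u' : ℝ → ℂ}

lemma integrableOn_deriv (hu : IsH1 u u') : IntegrableOn u' (Ioo 0 1) :=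
  hu.1.integrable (by norm_num)

lemma setIntegral_deriv_Ioo (hu : IsH1 u u') {a b : ℝ} (ha : 0 ≤ a) (hab : a ≤ b) (hb : b ≤ 1) :
    ∫ t in Ioo a b, u' t = u b - u a := by
  have hint : IntegrableOn u' (Ioc 0 1) :=
    (integrableOn_Ioc_iff_integrableOn_Ioo).2 hu.integrableOn_deriv
  have hII : ∀ x ∈ Icc (0:ℝ) 1, IntervalIntegrable u' volume 0 x := fun x hx =>
    (intervalIntegrable_iff_integrableOn_Ioc_of_le hx.1).2
      (hint.mono_set (Ioc_subset_Ioc_right hx.2))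
  have hb' : b ∈ Icc (0:ℝ) 1 := ⟨ha.trans hab, hb⟩
  have ha' : a ∈ Icc (0:ℝ) 1 := ⟨ha, hab.trans hb⟩
  rw [← integral_Ioc_eq_integral_Ioo, ← intervalIntegral.integral_of_le hab,
    ← intervalIntegral.integral_interval_sub_left (hII b hb') (hII a ha'), hu.2 b hb', hu.2 a ha']
  ring

lemma integrableOn_mul_conj_indicator (hu : IsH1 u u') (a b : ℝ) (c : ℂ) :
    IntegrableOn (fun t => u' t * conj ((Ioo a b).indicator (fun _ => c) t)) (Ioo 0 1) := by
  simp_rw [mul_conj_indicator_const]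
  exact (hu.integrableOn_deriv.mul_const _).indicator measurableSet_Ioo

lemma integral_mul_conj_indicator (hu : IsH1 u u') {a b : ℝ} (ha : 0 ≤ a) (hab : a ≤ b)
    (hb : b ≤ 1) (c : ℂ) :
    ∫ t in Ioo 0 1, u' t * conj ((Ioo a b).indicator (fun _ => c) t) = (u b - u a) * conj c := by
  have hsub : Ioo 0 1 ∩ Ioo a b = Ioo a b :=
    inter_eq_self_of_subset_right (Ioo_subset_Ioo ha hb)
  simp_rw [mul_conj_indicator_const]
  rw [setIntegral_indicator measurableSet_Ioo, hsub,
    integral_mul_const, hu.setIntegral_deriv_Ioo ha hab hb]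


lemma integral_mul_conj_twoStep (hu : IsH1 u u') {α y β : ℝ} (hα : 0 ≤ α) (hαy : α ≤ y)
    (hyβ : y ≤ β) (hβ : β ≤ 1) (p q : ℂ) :
    ∫ t in Ioo 0 1, u' t * conj (twoStep α y β p q t) =
      (u y - u α) * conj p + (u β - u y) * conj q := by
  simp only [twoStep, map_add, mul_add]
  rw [integral_add (hu.integrableOn_mul_conj_indicator _ _ _)
      (hu.integrableOn_mul_conj_indicator _ _ _),
    hu.integral_mul_conj_indicator hα hαy (hyβ.trans hβ),
    hu.integral_mul_conj_indicator (hα.trans hαy) hyβ hβ]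

end IsH1

lemma isH1_const_add_integral {g : ℝ → ℂ} (c : ℂ) (hg : MemLp g 2 (volume.restrict (Ioo 0 1))) :
    IsH1 (fun x => c + ∫ t in (0:ℝ)..x, g t) g :=
  ⟨hg, fun x _ => by simp⟩

section TestFunctions

variable {α y β θ : ℝ} {p q : ℂ} (φ₀ : ℂ)

lemma memV_const_add_integral_twoStep (hα : 0 ≤ α) (hαy : α ≤ y) (hyβ : y ≤ β) (hβ : β ≤ 1)
    (hφ : φ₀ + (p * (y - α) + q * (β - y)) = Complex.exp (2 * π * Complex.I * θ) * φ₀) :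
    MemV α β θ (fun x => φ₀ + ∫ t in (0:ℝ)..x, twoStep α y β p q t) (twoStep α y β p q) := by
  refine ⟨?_, Filter.Eventually.of_forall fun x hx => twoStep.eq_zero_of_notMem_Ioo hαy hyβ ?_⟩
  · simp only [intervalIntegral.integral_same, add_zero]
    rw [twoStep.intervalIntegral_of_le_right hα hαy hyβ hβ, hφ]
  · rintro ⟨h₁, h₂⟩
    rcases hx with hx | hx <;> linarith [hx.1, hx.2]

lemma setIntegral_const_add_integral_twoStep (hα : 0 ≤ α) (hαy : α ≤ y) (hyβ : y ≤ β)
    (hβ : β ≤ 1) :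
    ∫ x in Ioo 0 α ∪ Ioo β 1, (φ₀ + ∫ t in (0:ℝ)..x, twoStep α y β p q t) =
      α * φ₀ + (1 - β) * (φ₀ + (p * (y - α) + q * (β - y))) := by
  have hleft : EqOn (fun x => φ₀ + ∫ t in (0:ℝ)..x, twoStep α y β p q t) (fun _ => φ₀)
      (Ioo 0 α) := fun x hx => by
    simp only [twoStep.intervalIntegral_of_le_left hx.1.le hx.2.le hαy, add_zero]
  have hright : EqOn (fun x => φ₀ + ∫ t in (0:ℝ)..x, twoStep α y β p q t)
      (fun _ => φ₀ + (p * (y - α) + q * (β - y))) (Ioo β 1) := fun x hx => by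
    simp only [twoStep.intervalIntegral_of_le_right hα hαy hyβ hx.1.le]
  have hdisj : Disjoint (Ioo 0 α) (Ioo β 1) :=
    disjoint_left.2 fun t h₁ h₂ => by linarith [h₁.2, h₂.1]
  rw [setIntegral_union hdisj measurableSet_Ioo
      ((integrableOn_const measure_Ioo_lt_top.ne).congr_fun hleft.symm measurableSet_Ioo)
      ((integrableOn_const measure_Ioo_lt_top.ne).congr_fun hright.symm measurableSet_Ioo),
    setIntegral_congr_fun measurableSet_Ioo hleft, setIntegral_congr_fun measurableSet_Ioo hright,
    setIntegral_const, setIntegral_const, Real.volume_real_Ioo_of_le hα,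
    Real.volume_real_Ioo_of_le hβ, Complex.real_smul, Complex.real_smul]
  push_cast
  ring

end TestFunctions

lemma conj_exp_two_pi_I_mul (θ : ℝ) :
    conj (Complex.exp (2 * π * Complex.I * θ)) = Complex.exp (-(2 * π * Complex.I * θ)) := by
  rw [← Complex.exp_conj]
  simp only [map_mul, map_ofNat, Complex.conj_ofReal, Complex.conj_I]
  ring_nf

lemma exp_neg_two_pi_I_mul_ne_one {θ : ℝ} (hθ : θ ∈ Ioo 0 1) :
    Complex.exp (-(2 * π * Complex.I * θ)) ≠ 1 := by
  intro h
  obtain ⟨n, hn⟩ := Complex.exp_eq_one_iff.1 h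
  have hθn : θ = -n := by
    have h2π : (2 * π * Complex.I) ≠ 0 := by simp [Real.pi_ne_zero]
    have : (θ : ℂ) * (2 * π * Complex.I) = (-n : ℂ) * (2 * π * Complex.I) := by
      linear_combination -hn
    exact_mod_cast mul_right_cancel₀ h2π this
  have h₀ : (0 : ℝ) < -n := hθn ▸ hθ.1
  have h₁ : (-n : ℝ) < 1 := hθn ▸ hθ.2
  norm_cast at h₀ h₁
  omega

/-- The orthogonality condition defining `V^⊥(θ)`. -/
def IsPerpV (α β θ : ℝ) (w w' : ℝ → ℂ) : Prop :=
  ∀ φ φ' : ℝ → ℂ, IsH1 φ φ' → MemV α β θ φ φ' → innerH α β w w' φ φ' = 0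

namespace IsPerpV

variable {α β θ y : ℝ} {w w' : ℝ → ℂ}

lemma twoStep_relation (hperp : IsPerpV α β θ w w') (hw : IsH1 w w') (φ₀ p q : ℂ) (hα : 0 ≤ α)
    (hαy : α ≤ y) (hyβ : y ≤ β) (hβ : β ≤ 1)
    (hφ : φ₀ + (p * (y - α) + q * (β - y)) = Complex.exp (2 * π * Complex.I * θ) * φ₀) :
    (∫ x in Ioo 0 α ∪ Ioo β 1, w x) *
        conj (α * φ₀ + (1 - β) * (Complex.exp (2 * π * Complex.I * θ) * φ₀)) +
      ((w y - w α) * conj p + (w β - w y) * conj q) = 0 := by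
  have h := hperp _ _ (isH1_const_add_integral φ₀ twoStep.memLp_two)
    (memV_const_add_integral_twoStep φ₀ hα hαy hyβ hβ hφ)
  rwa [innerH, setIntegral_const_add_integral_twoStep φ₀ hα hαy hyβ hβ, hφ,
    hw.integral_mul_conj_twoStep hα hαy hyβ hβ] at h

lemma slope_eq (hperp : IsPerpV α β θ w w') (hw : IsH1 w w') (hα : 0 ≤ α) (hy : y ∈ Ioo α β)
    (hβ : β ≤ 1) :
    (w y - w α) * ((y : ℂ) - α)⁻¹ = (w β - w y) * ((β : ℂ) - y)⁻¹ := by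
  have hyα : (y : ℂ) - α ≠ 0 := sub_ne_zero.2 (by exact_mod_cast hy.1.ne')
  have hβy : (β : ℂ) - y ≠ 0 := sub_ne_zero.2 (by exact_mod_cast hy.2.ne')
  have h := hperp.twoStep_relation hw 0 ((y : ℂ) - α)⁻¹ (-((β : ℂ) - y)⁻¹) hα hy.1.le hy.2.le hβ
    (by field_simp; ring)
  simp only [mul_zero, add_zero, map_zero, zero_add, map_neg, map_inv₀, map_sub,
    Complex.conj_ofReal] at h
  linear_combination h

lemma eq_affine_on_Icc (hperp : IsPerpV α β θ w w') (hw : IsH1 w w') (hα : 0 ≤ α) (hαβ : α < β)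
    (hβ : β ≤ 1) (hy : y ∈ Icc α β) :
    w y = (w β - w α) * ((β : ℂ) - α)⁻¹ * ((y : ℂ) - α) + w α := by
  have hβα : (β : ℂ) - α ≠ 0 := sub_ne_zero.2 (by exact_mod_cast hαβ.ne')
  rcases hy.1.eq_or_lt with rfl | hαy
  · ring
  rcases hy.2.eq_or_lt with rfl | hyβ
  · field_simp; ring
  have hyα : (y : ℂ) - α ≠ 0 := sub_ne_zero.2 (by exact_mod_cast hαy.ne')
  have hβy : (β : ℂ) - y ≠ 0 := sub_ne_zero.2 (by exact_mod_cast hyβ.ne')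
  have h := hperp.slope_eq hw hα ⟨hαy, hyβ⟩ hβ
  field_simp at h ⊢
  linear_combination h

lemma integral_relation (hperp : IsPerpV α β θ w w') (hw : IsH1 w w') (hα : 0 ≤ α) (hαβ : α < β)
    (hβ : β ≤ 1) :
    (∫ x in Ioo 0 α ∪ Ioo β 1, w x) * (α + (1 - β) * Complex.exp (-(2 * π * Complex.I * θ))) +
      (w β - w α) * ((Complex.exp (-(2 * π * Complex.I * θ)) - 1) * ((β : ℂ) - α)⁻¹) = 0 := by
  have hβα : (β : ℂ) - α ≠ 0 := sub_ne_zero.2 (by exact_mod_cast hαβ.ne')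
  -- `φ₀ = 1`, `p = q = c` makes the test function `η(θ, ·)`.
  set c := (Complex.exp (2 * π * Complex.I * θ) - 1) * ((β : ℂ) - α)⁻¹
  have h := hperp.twoStep_relation hw 1 c c (y := (α + β) / 2) hα (by linarith) (by linarith) hβ
    (by simp only [c]; push_cast; field_simp; ring)
  simp only [c, mul_one, map_add, map_mul, map_sub, map_one, map_inv₀, Complex.conj_ofReal,
    conj_exp_two_pi_I_mul] at h
  linear_combination h

end IsPerpV

theorem stmt_6_general (α β : ℝ) (hα : 0 < α) (hαβ : α < β) (hβ : β < 1)
    (θ : ℝ) (hθ : θ ∈ Ico (0:ℝ) 1)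
    (w w' : ℝ → ℂ) (hw : IsH1 w w')
    (hperp : ∀ φ φ' : ℝ → ℂ, IsH1 φ φ' → MemV α β θ φ φ' →
      innerH α β w w' φ φ' = 0) :
    (∀ y ∈ Icc α β,
        w y = (w β - w α) * ((β : ℂ) - α)⁻¹ * ((y : ℂ) - α) + w α) ∧
    (θ ≠ 0 →
      ((β : ℂ) - α)⁻¹ * (w β - w α) =
        (1 - Complex.exp (-(2 * Real.pi * Complex.I * θ)))⁻¹ *
          ((α : ℂ) + (1 - β) * Complex.exp (-(2 * Real.pi * Complex.I * θ))) *
          ∫ y in Ioo (0:ℝ) α ∪ Ioo β 1, w y) ∧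
    (θ = 0 → (∫ y in Ioo (0:ℝ) α ∪ Ioo β 1, w y) = 0) := by
  have hperp' : IsPerpV α β θ w w' := hperp
  have hrel := hperp'.integral_relation hw hα.le hαβ hβ.le
  have hβα : (β : ℂ) - α ≠ 0 := sub_ne_zero.2 (by exact_mod_cast hαβ.ne')
  refine ⟨fun y hy => hperp'.eq_affine_on_Icc hw hα.le hαβ hβ.le hy, fun hθ₀ => ?_, fun hθ₀ => ?_⟩
  · have hE : 1 - Complex.exp (-(2 * π * Complex.I * θ)) ≠ 0 :=
      sub_ne_zero.2 (exp_neg_two_pi_I_mul_ne_one ⟨hθ.1.lt_of_ne' hθ₀, hθ.2⟩).symm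
    field_simp at hrel ⊢
    linear_combination -hrel
  · have hQ₁ : (α : ℂ) + (1 - β) ≠ 0 := by exact_mod_cast (by linarith : 0 < α + (1 - β)).ne'
    simpa [hθ₀, hQ₁] using hrel

theorem stmt_6 (α β : ℝ) (hα : 0 < α) (hαβ : α < β) (hβ : β < 1)
    (θ : ℝ) (hθ : θ ∈ Ico (0:ℝ) 1)
    (w w' : ℝ → ℂ) (hw : IsH1 w w')
    (hwq : w 1 = Complex.exp (2 * Real.pi * Complex.I * θ) * w 0)
    (hperp : ∀ φ φ' : ℝ → ℂ, IsH1 φ φ' → MemV α β θ φ φ' →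
      innerH α β w w' φ φ' = 0) :
    (∀ y ∈ Icc α β,
        w y = (w β - w α) * ((β : ℂ) - α)⁻¹ * ((y : ℂ) - α) + w α) ∧
    (θ ≠ 0 →
      ((β : ℂ) - α)⁻¹ * (w β - w α) =
        (1 - Complex.exp (-(2 * Real.pi * Complex.I * θ)))⁻¹ *
          ((α : ℂ) + (1 - β) * Complex.exp (-(2 * Real.pi * Complex.I * θ))) *
          ∫ y in Ioo (0:ℝ) α ∪ Ioo β 1, w y) ∧
    (θ = 0 → (∫ y in Ioo (0:ℝ) α ∪ Ioo β 1, w y) = 0) :=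
  stmt_6_general α β hα hαβ hβ θ hθ w w' hw hperp
end
end

section
/- There exists a constant C̃ > 0, depending only on α and β, such that for every θ ∈ [0,1) and every w ∈ V^⊥(θ): |||w|||² ≤ C̃ ∫_{Q₁} |w'(y)|² dy. -/
open MeasureTheory Real Set
open scoped ComplexConjugate

noncomputable section

/-- `|||u|||² = |∫_{Q₁} u|² + ∫₀¹ |u'|²`. -/
def tripleNormSq (α β : ℝ) (u u' : ℝ → ℂ) : ℝ :=
  ‖∫ y in Ioo (0:ℝ) α ∪ Ioo β 1, u y‖ ^ 2 + ∫ y in Ioo (0:ℝ) 1, ‖u' y‖ ^ 2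

/-!
Two elements of `V(θ)` are tested against `w`. The first vanishes on `Q₁` and has derivative
`w' - ⨍_{Q₀} w'` on `Q₀`; orthogonality forces `w'` to be constant on `Q₀`, so
`∫_{Q₀} |w'|² = |∫_{Q₀} w'|² / (β - α)`. The second is `η(θ, ·)`, and orthogonality gives
`(∫_{Q₁} w) conj(A) (β - α) + (∫_{Q₀} w') conj(e - 1) = 0` with `e = e^{2πiθ}` and
`A = α + (1 - β) e = ∫_{Q₁} η`. Quasi-periodicity gives `∫_{Q₀} w' + ∫_{Q₁} w' = (e - 1) w(0)`,
and `∫_{Q₁} w = A w(0)` up to `∫_{Q₁} |w'|`. Substituting yields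
`w(0) (|A|² (β - α) + |e - 1|²) = O(∫_{Q₁} |w'|)`, and the bracket is bounded below uniformly
in `θ` because `A - (1 - β)(e - 1) = α + 1 - β`. Hence `|∫_{Q₁} w|` and `|∫_{Q₀} w'|` are
`O(∫_{Q₁} |w'|)`, and Cauchy–Schwarz on `Q₁` finishes.
-/

lemma sq_integral_le_measureReal_mul_integral_sq {X : Type*} [MeasurableSpace X]
    {μ : Measure X} [IsFiniteMeasure μ] {f : X → ℝ} (hf : MemLp f 2 μ) :
    (∫ x, f x ∂μ) ^ 2 ≤ μ.real univ * ∫ x, f x ^ 2 ∂μ := by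
  have hf₁ : Integrable f μ := hf.integrable one_le_two
  have hquadratic : ∀ t : ℝ,
      0 ≤ μ.real univ * (t * t) + (-2 * ∫ x, f x ∂μ) * t + ∫ x, f x ^ 2 ∂μ := by
    intro t
    have hexpand : ∫ x, (f x - t) ^ 2 ∂μ =
        μ.real univ * (t * t) + (-2 * ∫ x, f x ∂μ) * t + ∫ x, f x ^ 2 ∂μ := by
      simp_rw [sub_sq]
      have hlin : Integrable (fun x => 2 * f x * t) μ := (hf₁.const_mul 2).mul_const t
      rw [integral_add (f := fun x => f x ^ 2 - 2 * f x * t) (hf.integrable_sq.sub hlin)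
          (integrable_const _),
        integral_sub hf.integrable_sq hlin, integral_mul_const,
        integral_const_mul, integral_const, smul_eq_mul]
      ring
    exact hexpand ▸ integral_nonneg fun x => sq_nonneg _
  have := discrim_le_zero hquadratic
  rw [discrim] at this
  linarith

lemma integral_norm_sq_eq_of_integral_mul_conj_sub_average_eq_zero {X : Type*}
    [MeasurableSpace X] {μ : Measure X} [IsFiniteMeasure μ] {f : X → ℂ} (hf : MemLp f 2 μ)
    (h : ∫ x, f x * conj (f x - ⨍ y, f y ∂μ) ∂μ = 0) :
    ∫ x, ‖f x‖ ^ 2 ∂μ = ‖∫ x, f x ∂μ‖ ^ 2 / μ.real univ := by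
  have hexpand : ∀ x, f x * conj (f x - ⨍ y, f y ∂μ) =
      ((‖f x‖ ^ 2 : ℝ) : ℂ) - f x * conj (⨍ y, f y ∂μ) := fun x => by
    rw [map_sub, mul_sub, Complex.mul_conj, Complex.normSq_eq_norm_sq]
  simp_rw [hexpand] at h
  rw [integral_sub (f := fun x => ((‖f x‖ ^ 2 : ℝ) : ℂ)) hf.norm.integrable_sq.ofReal
      ((hf.integrable one_le_two).mul_const _),
    integral_mul_const, integral_complex_ofReal, sub_eq_zero, average_eq, Complex.real_smul,
    map_mul, Complex.conj_ofReal, mul_left_comm, Complex.mul_conj,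
    Complex.normSq_eq_norm_sq] at h
  exact_mod_cast (h.trans (by push_cast; ring) :
    ((∫ x, ‖f x‖ ^ 2 ∂μ : ℝ) : ℂ) = ((‖∫ x, f x ∂μ‖ ^ 2 / μ.real univ : ℝ) : ℂ))

lemma norm_setIntegral_sub_smul_le {X E : Type*} [MeasurableSpace X] [NormedAddCommGroup E]
    [NormedSpace ℝ E] [CompleteSpace E] {μ : Measure X} {s : Set X} (hs : μ s < ⊤) {f : X → E}
    (hf : IntegrableOn f s μ) {c : E} {M : ℝ} (h : ∀ y ∈ s, ‖f y - c‖ ≤ M) :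
    ‖(∫ y in s, f y ∂μ) - μ.real s • c‖ ≤ M * μ.real s := by
  rw [← setIntegral_const, ← integral_sub hf (integrableOn_const hs.ne)]
  exact norm_setIntegral_le_of_norm_le_const hs h

namespace IsH1

variable {u u' : ℝ → ℂ}

lemma integrableOn_Icc (hu : IsH1 u u') : IntegrableOn u' (Icc 0 1) := by
  rw [IntegrableOn, ← restrict_Ioo_eq_restrict_Icc]
  exact hu.1.integrable one_le_two

lemma sub_eq_intervalIntegral (hu : IsH1 u u') {x y : ℝ} (hx : x ∈ Icc (0:ℝ) 1)
    (hy : y ∈ Icc (0:ℝ) 1) : u y - u x = ∫ t in x..y, u' t := by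
  have hint : ∀ z ∈ Icc (0:ℝ) 1, IntervalIntegrable u' volume 0 z := fun z hz =>
    (hu.integrableOn_Icc.mono_set
      (uIcc_subset_Icc (left_mem_Icc.2 zero_le_one) hz)).intervalIntegrable
  rw [hu.2 y hy, hu.2 x hx, add_sub_add_left_eq_sub,
    intervalIntegral.integral_interval_sub_left (hint y hy) (hint x hx)]

lemma continuousOn (hu : IsH1 u u') : ContinuousOn u (Icc 0 1) := by
  have hprim := intervalIntegral.continuousOn_primitive_interval (a := 0) (b := 1)
    (by rw [uIcc_of_le zero_le_one]; exact hu.integrableOn_Icc)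
  rw [uIcc_of_le zero_le_one] at hprim
  exact (continuousOn_const.add hprim).congr hu.2

lemma norm_sub_le (hu : IsH1 u u') {x y : ℝ} (hx : 0 ≤ x) (hxy : x ≤ y) (hy : y ≤ 1) :
    ‖u y - u x‖ ≤ ∫ t in Ioo x y, ‖u' t‖ := by
  rw [hu.sub_eq_intervalIntegral ⟨hx, hxy.trans hy⟩ ⟨hx.trans hxy, hy⟩,
    intervalIntegral.integral_of_le hxy, ← integral_Ioc_eq_integral_Ioo]
  exact norm_integral_le_integral_norm _

lemma integral_Ioo_zero_one (hu : IsH1 u u') : ∫ t in Ioo 0 1, u' t = u 1 - u 0 := by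
  rw [hu.sub_eq_intervalIntegral (left_mem_Icc.2 zero_le_one) (right_mem_Icc.2 zero_le_one),
    intervalIntegral.integral_of_le zero_le_one, integral_Ioc_eq_integral_Ioo]

end IsH1

lemma le_norm_add_norm_sub_one {α β : ℝ} (hβ₀ : 0 ≤ β) (hβ : β ≤ 1) (e : ℂ) :
    α + (1 - β) ≤ ‖(α + (1 - β) * e : ℂ)‖ + ‖e - 1‖ :=
  calc α + (1 - β) ≤ ‖((α + (1 - β) : ℝ) : ℂ)‖ := by
        rw [Complex.norm_real, Real.norm_eq_abs]; exact le_abs_self _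
    _ = ‖(α + (1 - β) * e : ℂ) - (1 - β : ℝ) * (e - 1)‖ := by push_cast; ring_nf
    _ ≤ ‖(α + (1 - β) * e : ℂ)‖ + (1 - β) * ‖e - 1‖ := by
        refine (norm_sub_le _ _).trans_eq ?_
        rw [norm_mul, Complex.norm_real, Real.norm_of_nonneg (by linarith)]
    _ ≤ ‖(α + (1 - β) * e : ℂ)‖ + ‖e - 1‖ := by
        gcongr; exact mul_le_of_le_one_left (norm_nonneg _) (by linarith)

-- The abstract form of the final estimate: `x = w(0)`, `A = α + (1 - β) e^{2πiθ}`,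
-- `b = e^{2πiθ} - 1`, `d = β - α`, `J = ∫_{Q₁} w`, and `I₀`, `I₁` the integrals of `w'` over
-- `Q₀`, `Q₁`.
lemma norm_le_of_cell_relations {A b J I₀ I₁ x : ℂ} {d γ L : ℝ} (hd : 0 < d) (hd₁ : d ≤ 1)
    (hγ : 0 < γ) (hA : ‖A‖ ≤ 1) (hb : ‖b‖ ≤ 2) (hγAb : γ ≤ ‖A‖ + ‖b‖)
    (horth : J * conj A * d + I₀ * conj b = 0) (hper : I₀ + I₁ = b * x)
    (hJ : ‖J - A * x‖ ≤ L) (hI₁ : ‖I₁‖ ≤ L) :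
    ‖x‖ ≤ 6 / (d * γ ^ 2) * L := by
  set R := J - A * x
  have hx : x * ((‖A‖ ^ 2 * d + ‖b‖ ^ 2 : ℝ) : ℂ) = -(R * conj A * d) + I₁ * conj b := by
    push_cast
    rw [← Complex.mul_conj', ← Complex.mul_conj']
    linear_combination horth - conj b * hper
  have hupper : ‖x‖ * (‖A‖ ^ 2 * d + ‖b‖ ^ 2) ≤ 3 * L := by
    have hnorm := congrArg norm hx
    rw [norm_mul, Complex.norm_real, Real.norm_of_nonneg (by positivity)] at hnorm
    rw [hnorm]
    refine (norm_add_le _ _).trans ?_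
    rw [norm_neg, norm_mul, norm_mul, norm_mul, Complex.norm_conj, Complex.norm_conj,
      Complex.norm_real, Real.norm_of_nonneg hd.le]
    have hL : 0 ≤ L := (norm_nonneg _).trans hJ
    nlinarith [mul_le_mul hJ hA (norm_nonneg _) hL, mul_le_mul hI₁ hb (norm_nonneg _) hL]
  have hlower : d * γ ^ 2 / 2 ≤ ‖A‖ ^ 2 * d + ‖b‖ ^ 2 := by
    nlinarith [sq_nonneg (‖A‖ - ‖b‖), mul_le_mul hγAb hγAb hγ.le (by positivity),
      mul_nonneg (sub_nonneg.2 hd₁) (sq_nonneg ‖b‖)]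
  rw [div_mul_eq_mul_div, le_div_iff₀ (by positivity)]
  nlinarith [mul_le_mul_of_nonneg_left hlower (norm_nonneg x)]

section Cell

variable {α β : ℝ}

local notation "Q₁" => Ioo (0:ℝ) α ∪ Ioo β 1

lemma disjoint_Ioo_zero_Ioo_one (hαβ : α ≤ β) : Disjoint (Ioo (0:ℝ) α) (Ioo β 1) :=
  Ioo_disjoint_Ioo.2 (by simp [hαβ])

lemma volume_real_Q₁ (hα : 0 ≤ α) (hαβ : α ≤ β) (hβ : β ≤ 1) :
    volume.real Q₁ = α + (1 - β) := by
  rw [measureReal_union (disjoint_Ioo_zero_Ioo_one hαβ) measurableSet_Ioo measure_Ioo_lt_top.ne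
      measure_Ioo_lt_top.ne,
    volume_real_Ioo_of_le hα, volume_real_Ioo_of_le hβ, sub_zero]

lemma integral_Ioo_zero_one_eq {E : Type*} [NormedAddCommGroup E] [NormedSpace ℝ E]
    (hα : 0 ≤ α) (hαβ : α ≤ β) (hβ : β ≤ 1) {f : ℝ → E} (hf : IntegrableOn f (Ioo 0 1)) :
    ∫ y in Ioo 0 1, f y = (∫ y in Q₁, f y) + ∫ y in Ioo α β, f y := by
  replace hf : IntegrableOn f (Icc 0 1) := by rwa [IntegrableOn, ← restrict_Ioo_eq_restrict_Icc]
  have hsub : ∀ {a b : ℝ}, 0 ≤ a → b ≤ 1 → Icc a b ⊆ Icc 0 1 := fun ha hb =>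
    Icc_subset_Icc ha hb
  have hinterval : ∀ {a b : ℝ}, 0 ≤ a → a ≤ b → b ≤ 1 →
      ∫ y in Ioo a b, f y = ∫ y in a..b, f y := fun _ hab _ => by
    rw [intervalIntegral.integral_of_le hab, integral_Ioc_eq_integral_Ioo]
  have hii : ∀ {a b : ℝ}, 0 ≤ a → a ≤ b → b ≤ 1 → IntervalIntegrable f volume a b :=
    fun ha hab hb => (hf.mono_set (by rw [uIcc_of_le hab]; exact hsub ha hb)).intervalIntegrable
  have hβ₀ : 0 ≤ β := hα.trans hαβ
  have hα₁ : α ≤ 1 := hαβ.trans hβ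
  rw [setIntegral_union (disjoint_Ioo_zero_Ioo_one hαβ) measurableSet_Ioo
      (hf.mono_set (Ioo_subset_Icc_self.trans (hsub le_rfl hα₁)))
      (hf.mono_set (Ioo_subset_Icc_self.trans (hsub hβ₀ le_rfl))),
    hinterval le_rfl zero_le_one le_rfl, hinterval le_rfl hα hα₁, hinterval hβ₀ hβ le_rfl,
    hinterval hα hαβ hβ, ← intervalIntegral.integral_add_adjacent_intervals (hii le_rfl hα hα₁)
      (hii hα (hαβ.trans hβ) le_rfl),
    ← intervalIntegral.integral_add_adjacent_intervals (hii hα hαβ hβ) (hii hβ₀ hβ le_rfl)]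
  abel

lemma setIntegral_Q₁_of_eqOn (hα : 0 ≤ α) (hαβ : α ≤ β) (hβ : β ≤ 1) {u : ℝ → ℂ} {c d : ℂ}
    (hc : EqOn u (fun _ => c) (Ioo 0 α)) (hd : EqOn u (fun _ => d) (Ioo β 1)) :
    ∫ y in Q₁, u y = α * c + (1 - β) * d := by
  rw [setIntegral_union (disjoint_Ioo_zero_Ioo_one hαβ) measurableSet_Ioo
      ((integrableOn_const measure_Ioo_lt_top.ne).congr_fun hc.symm measurableSet_Ioo)
      ((integrableOn_const measure_Ioo_lt_top.ne).congr_fun hd.symm measurableSet_Ioo),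
    setIntegral_congr_fun measurableSet_Ioo hc, setIntegral_congr_fun measurableSet_Ioo hd,
    setIntegral_const, setIntegral_const, volume_real_Ioo_of_le hα, volume_real_Ioo_of_le hβ,
    Complex.real_smul, Complex.real_smul]
  push_cast
  ring

-- `Q₀Primitive α β 1 (fun _ => (e^{2πiθ} - 1) / (β - α))` is `η(θ, ·)`.
def Q₀Primitive (α β : ℝ) (c : ℂ) (g : ℝ → ℂ) (x : ℝ) : ℂ :=
  c + ∫ t in (0:ℝ)..x, (Ioo α β).indicator g t

lemma Q₀Primitive_eq_add_setIntegral {c : ℂ} {g : ℝ → ℂ} {x : ℝ} (hx : 0 ≤ x) :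
    Q₀Primitive α β c g x = c + ∫ t in Ioo α β ∩ Ioc 0 x, g t := by
  rw [Q₀Primitive, intervalIntegral.integral_of_le hx, integral_indicator measurableSet_Ioo,
    Measure.restrict_restrict measurableSet_Ioo]

lemma Q₀Primitive_of_le {c : ℂ} {g : ℝ → ℂ} {x : ℝ} (hx : 0 ≤ x) (hxα : x ≤ α) :
    Q₀Primitive α β c g x = c := by
  have hempty : Ioo α β ∩ Ioc 0 x = ∅ :=
    eq_empty_of_forall_notMem fun t ⟨⟨hαt, _⟩, ⟨_, htx⟩⟩ => by linarith
  rw [Q₀Primitive_eq_add_setIntegral hx, hempty, Measure.restrict_empty, integral_zero_measure,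
    add_zero]

lemma Q₀Primitive_of_ge (hα : 0 ≤ α) (hαβ : α ≤ β) {c : ℂ} {g : ℝ → ℂ} {x : ℝ}
    (hβx : β ≤ x) : Q₀Primitive α β c g x = c + ∫ t in Ioo α β, g t := by
  rw [Q₀Primitive_eq_add_setIntegral (hα.trans (hαβ.trans hβx)),
    inter_eq_left.2 (Ioo_subset_Ioc_self.trans (Ioc_subset_Ioc hα hβx))]

lemma isH1_Q₀Primitive {c : ℂ} {g : ℝ → ℂ} (hg : MemLp g 2 (volume.restrict (Ioo 0 1))) :
    IsH1 (Q₀Primitive α β c g) ((Ioo α β).indicator g) :=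
  ⟨hg.indicator measurableSet_Ioo, fun x _ => by simp [Q₀Primitive]⟩

lemma memV_Q₀Primitive (hα : 0 ≤ α) (hαβ : α ≤ β) (hβ : β ≤ 1) {θ : ℝ} {c : ℂ} {g : ℝ → ℂ}
    (hg : ∫ t in Ioo α β, g t = (Complex.exp (2 * π * Complex.I * θ) - 1) * c) :
    MemV α β θ (Q₀Primitive α β c g) ((Ioo α β).indicator g) := by
  refine ⟨?_, .of_forall fun y hy => indicator_of_notMem ?_ g⟩
  · rw [Q₀Primitive_of_ge hα hαβ hβ, hg, Q₀Primitive_of_le le_rfl hα]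
    ring
  · rintro ⟨hαy, hyβ⟩
    rcases hy with ⟨-, hyα⟩ | ⟨hβy, -⟩ <;> linarith

lemma setIntegral_Q₁_Q₀Primitive (hα : 0 ≤ α) (hαβ : α ≤ β) (hβ : β ≤ 1) {e c : ℂ}
    {g : ℝ → ℂ} (hg : ∫ t in Ioo α β, g t = (e - 1) * c) :
    ∫ y in Q₁, Q₀Primitive α β c g y = c * (α + (1 - β) * e) := by
  rw [setIntegral_Q₁_of_eqOn hα hαβ hβ (c := c) (d := e * c)
    (fun y hy => Q₀Primitive_of_le hy.1.le hy.2.le)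
    (fun y hy => by rw [Q₀Primitive_of_ge hα hαβ hy.1.le, hg]; ring)]
  ring

lemma innerH_Q₀Primitive (hα : 0 ≤ α) (hβ : β ≤ 1) (w w' : ℝ → ℂ) (c : ℂ) (g : ℝ → ℂ) :
    innerH α β w w' (Q₀Primitive α β c g) ((Ioo α β).indicator g) =
      (∫ y in Q₁, w y) * conj (∫ y in Q₁, Q₀Primitive α β c g y) +
        ∫ y in Ioo α β, w' y * conj (g y) := by
  have hmul : (fun y => w' y * conj ((Ioo α β).indicator g y)) =
      (Ioo α β).indicator (fun y => w' y * conj (g y)) := by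
    ext y
    by_cases hy : y ∈ Ioo α β <;> simp [hy]
  rw [innerH, hmul, integral_indicator measurableSet_Ioo,
    Measure.restrict_restrict measurableSet_Ioo, inter_eq_left.2 (Ioo_subset_Ioo hα hβ)]

def OrthogonalToV (α β θ : ℝ) (w w' : ℝ → ℂ) : Prop :=
  ∀ φ φ' : ℝ → ℂ, IsH1 φ φ' → MemV α β θ φ φ' → innerH α β w w' φ φ' = 0

namespace OrthogonalToV

variable {θ : ℝ} {w w' : ℝ → ℂ}

lemma innerH_Q₀Primitive_eq_zero (hα : 0 ≤ α) (hαβ : α ≤ β) (hβ : β ≤ 1)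
    (horth : OrthogonalToV α β θ w w')
    {c : ℂ} {g : ℝ → ℂ} (hg : MemLp g 2 (volume.restrict (Ioo 0 1)))
    (hgc : ∫ t in Ioo α β, g t = (Complex.exp (2 * π * Complex.I * θ) - 1) * c) :
    (∫ y in Q₁, w y) * conj (c * (α + (1 - β) * Complex.exp (2 * π * Complex.I * θ))) +
      ∫ y in Ioo α β, w' y * conj (g y) = 0 := by
  rw [← setIntegral_Q₁_Q₀Primitive hα hαβ hβ hgc, ← innerH_Q₀Primitive hα hβ]
  exact horth _ _ (isH1_Q₀Primitive hg) (memV_Q₀Primitive hα hαβ hβ hgc)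

lemma setIntegral_Q₀_norm_sq (hα : 0 ≤ α) (hαβ : α ≤ β) (hβ : β ≤ 1)
    (horth : OrthogonalToV α β θ w w') (hw : IsH1 w w') :
    ∫ y in Ioo α β, ‖w' y‖ ^ 2 = ‖∫ y in Ioo α β, w' y‖ ^ 2 / (β - α) := by
  have hrel := horth.innerH_Q₀Primitive_eq_zero hα hαβ hβ (c := 0)
    (g := fun y => w' y - ⨍ y in Ioo α β, w' y)
    (hw.1.sub (memLp_const _))
    (by rw [setAverage_sub_setAverage measure_Ioo_lt_top.ne, mul_zero])
  rw [zero_mul, map_zero, mul_zero, zero_add] at hrel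
  rw [integral_norm_sq_eq_of_integral_mul_conj_sub_average_eq_zero
    (hw.1.mono_measure (Measure.restrict_mono (Ioo_subset_Ioo hα hβ) le_rfl)) hrel,
    measureReal_restrict_apply_univ, volume_real_Ioo_of_le hαβ]

lemma inner_eta_eq_zero (hα : 0 ≤ α) (hαβ : α < β) (hβ : β ≤ 1)
    (horth : OrthogonalToV α β θ w w') :
    (∫ y in Q₁, w y) * conj (α + (1 - β) * Complex.exp (2 * π * Complex.I * θ)) *
        ((β - α : ℝ) : ℂ) +
      (∫ y in Ioo α β, w' y) * conj (Complex.exp (2 * π * Complex.I * θ) - 1) = 0 := by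
  have hβα : ((β : ℂ) - α) ≠ 0 := sub_ne_zero.2 (Complex.ofReal_injective.ne hαβ.ne')
  have hrel := horth.innerH_Q₀Primitive_eq_zero hα hαβ.le hβ (c := 1)
    (memLp_const ((Complex.exp (2 * π * Complex.I * θ) - 1) / (β - α)))
    (by rw [setIntegral_const, volume_real_Ioo_of_le hαβ.le, Complex.real_smul]; push_cast
        field_simp)
  rw [one_mul, integral_mul_const, map_div₀, map_sub _ (β : ℂ), Complex.conj_ofReal,
    Complex.conj_ofReal] at hrel
  field_simp at hrel
  push_cast
  linear_combination hrel

end OrthogonalToV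

lemma IsH1.norm_setIntegral_Q₁_sub_le (hα : 0 ≤ α) (hαβ : α ≤ β) (hβ : β ≤ 1)
    {u u' : ℝ → ℂ} (hu : IsH1 u u') :
    ‖(∫ y in Q₁, u y) - (α * u 0 + (1 - β) * u 1)‖ ≤ ∫ y in Q₁, ‖u' y‖ := by
  set L := ∫ y in Q₁, ‖u' y‖
  have hQ₁ : Q₁ ⊆ Icc 0 1 := union_subset (Ioo_subset_Icc_self.trans (Icc_subset_Icc le_rfl
    (hαβ.trans hβ))) (Ioo_subset_Icc_self.trans (Icc_subset_Icc (hα.trans hαβ) le_rfl))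
  have hL₀ : 0 ≤ L := setIntegral_nonneg (measurableSet_Ioo.union measurableSet_Ioo)
    fun _ _ => norm_nonneg _
  have hosc : ∀ {x y : ℝ}, Ioo x y ⊆ Q₁ → 0 ≤ x → x ≤ y → y ≤ 1 → ‖u y - u x‖ ≤ L :=
    fun hsub hx hxy hy => (hu.norm_sub_le hx hxy hy).trans <|
      setIntegral_mono_set (hu.integrableOn_Icc.mono_set hQ₁).norm
        (.of_forall fun _ => norm_nonneg _) hsub.eventuallyLE
  have hint : IntegrableOn u (Icc 0 1) := hu.continuousOn.integrableOn_compact isCompact_Icc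
  have hleft := norm_setIntegral_sub_smul_le measure_Ioo_lt_top
    (hint.mono_set (subset_union_left.trans hQ₁)) (c := u 0) (M := L) fun y hy =>
      hosc (fun t ht => Or.inl ⟨ht.1, ht.2.trans hy.2⟩) le_rfl hy.1.le
        (hy.2.le.trans (hαβ.trans hβ))
  have hright := norm_setIntegral_sub_smul_le measure_Ioo_lt_top
    (hint.mono_set (subset_union_right.trans hQ₁)) (c := u 1) (M := L) fun y hy => by
      rw [norm_sub_rev]
      exact hosc (fun t ht => Or.inr ⟨hy.1.trans ht.1, ht.2⟩) (hα.trans (hαβ.trans hy.1.le))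
        hy.2.le le_rfl
  rw [volume_real_Ioo_of_le hα, sub_zero, Complex.real_smul] at hleft
  rw [volume_real_Ioo_of_le hβ, Complex.real_smul, Complex.ofReal_sub, Complex.ofReal_one]
    at hright
  rw [setIntegral_union (disjoint_Ioo_zero_Ioo_one hαβ) measurableSet_Ioo
    (hint.mono_set (subset_union_left.trans hQ₁)) (hint.mono_set (subset_union_right.trans hQ₁))]
  calc _ = ‖((∫ y in Ioo 0 α, u y) - α * u 0) + ((∫ y in Ioo β 1, u y) - (1 - β) * u 1)‖ := by
        ring_nf
    _ ≤ L * α + L * (1 - β) := norm_add_le_of_le hleft hright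
    _ ≤ L := by nlinarith

lemma IsH1.sq_setIntegral_Q₁_norm_le (hα : 0 ≤ α) (hαβ : α ≤ β) (hβ : β ≤ 1)
    {u u' : ℝ → ℂ} (hu : IsH1 u u') :
    (∫ y in Q₁, ‖u' y‖) ^ 2 ≤ ∫ y in Q₁, ‖u' y‖ ^ 2 := by
  have hQ₁ : Q₁ ⊆ Ioo 0 1 := union_subset (Ioo_subset_Ioo le_rfl (hαβ.trans hβ))
    (Ioo_subset_Ioo (hα.trans hαβ) le_rfl)
  have : IsFiniteMeasure (volume.restrict Q₁) :=
    isFiniteMeasure_restrict.2 (measure_union_lt_top measure_Ioo_lt_top measure_Ioo_lt_top).ne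
  have hK : 0 ≤ ∫ y in Q₁, ‖u' y‖ ^ 2 :=
    setIntegral_nonneg (measurableSet_Ioo.union measurableSet_Ioo) fun _ _ => sq_nonneg _
  have hCS := sq_integral_le_measureReal_mul_integral_sq
    (hu.1.norm.mono_measure (Measure.restrict_mono hQ₁ le_rfl))
  rw [measureReal_restrict_apply_univ, volume_real_Q₁ hα hαβ hβ] at hCS
  nlinarith

lemma OrthogonalToV.norm_integrals_le (hα : 0 ≤ α) (hαβ : α < β) (hβ : β < 1) {θ : ℝ} {w w' : ℝ → ℂ}
    (horth : OrthogonalToV α β θ w w') (hw : IsH1 w w')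
    (hqp : w 1 = Complex.exp (2 * π * Complex.I * θ) * w 0) :
    ‖∫ y in Q₁, w y‖ ≤ (12 / ((β - α) * (α + (1 - β)) ^ 2) + 1) * ∫ y in Q₁, ‖w' y‖ ∧
      ‖∫ y in Ioo α β, w' y‖ ≤
        (12 / ((β - α) * (α + (1 - β)) ^ 2) + 1) * ∫ y in Q₁, ‖w' y‖ := by
  set e := Complex.exp (2 * π * Complex.I * θ)
  set A : ℂ := α + (1 - β) * e
  set L := ∫ y in Q₁, ‖w' y‖
  have he : ‖e‖ = 1 := by rw [Complex.norm_exp]; simp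
  have hA : ‖A‖ ≤ 1 :=
    calc ‖A‖ ≤ ‖((α : ℝ) : ℂ)‖ + ‖((1 - β : ℝ) : ℂ)‖ * ‖e‖ := by
          push_cast; exact (norm_add_le _ _).trans_eq (by rw [norm_mul])
      _ = α + (1 - β) := by
          rw [he, mul_one, Complex.norm_real, Complex.norm_real, Real.norm_of_nonneg hα,
            Real.norm_of_nonneg (by linarith)]
      _ ≤ 1 := by linarith
  have hb : ‖e - 1‖ ≤ 2 := (norm_sub_le _ _).trans (by rw [he, norm_one]; norm_num)
  have hR : ‖(∫ y in Q₁, w y) - A * w 0‖ ≤ L := by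
    convert hw.norm_setIntegral_Q₁_sub_le hα hαβ.le hβ.le using 3
    rw [hqp]; ring
  have hI₁ : ‖∫ y in Q₁, w' y‖ ≤ L := norm_integral_le_integral_norm _
  have hper : (∫ y in Ioo α β, w' y) + ∫ y in Q₁, w' y = (e - 1) * w 0 := by
    rw [add_comm, ← integral_Ioo_zero_one_eq hα hαβ.le hβ.le (hw.1.integrable one_le_two),
      hw.integral_Ioo_zero_one, hqp]
    ring
  have hd₁ : β - α ≤ 1 := by linarith
  have hγ : 0 < α + (1 - β) := by linarith
  have hw₀ := norm_le_of_cell_relations (sub_pos.2 hαβ) hd₁ hγ hA hb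
    (le_norm_add_norm_sub_one (hα.trans hαβ.le) hβ.le e) (horth.inner_eta_eq_zero hα hαβ hβ.le)
    hper hR hI₁
  have hL : 0 ≤ L := (norm_nonneg _).trans hI₁
  have hw₀L : 0 ≤ 6 / ((β - α) * (α + (1 - β)) ^ 2) * L := (norm_nonneg _).trans hw₀
  constructor
  · calc ‖∫ y in Q₁, w y‖ = ‖A * w 0 + ((∫ y in Q₁, w y) - A * w 0)‖ := by ring_nf
      _ ≤ ‖A‖ * ‖w 0‖ + L := (norm_add_le _ _).trans (by rw [norm_mul]; gcongr)
      _ ≤ 1 * (6 / ((β - α) * (α + (1 - β)) ^ 2) * L) + L := by gcongr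
      _ ≤ 2 * (6 / ((β - α) * (α + (1 - β)) ^ 2) * L) + L := by linarith
      _ = _ := by ring
  · calc ‖∫ y in Ioo α β, w' y‖ = ‖(e - 1) * w 0 - ∫ y in Q₁, w' y‖ := by
          rw [← hper, add_sub_cancel_right]
      _ ≤ ‖e - 1‖ * ‖w 0‖ + L := (norm_sub_le _ _).trans (by rw [norm_mul]; gcongr)
      _ ≤ 2 * (6 / ((β - α) * (α + (1 - β)) ^ 2) * L) + L := by gcongr
      _ = _ := by ring

end Cell

theorem stmt_7 (α β : ℝ) (hα : 0 < α) (hαβ : α < β) (hβ : β < 1) :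
    ∃ C > (0:ℝ), ∀ θ ∈ Ico (0:ℝ) 1, ∀ w w' : ℝ → ℂ, IsH1 w w' →
      w 1 = Complex.exp (2 * Real.pi * Complex.I * θ) * w 0 →
      (∀ φ φ' : ℝ → ℂ, IsH1 φ φ' → MemV α β θ φ φ' →
        innerH α β w w' φ φ' = 0) →
      tripleNormSq α β w w' ≤ C * ∫ y in Ioo (0:ℝ) α ∪ Ioo β 1, ‖w' y‖ ^ 2 := by
  set c := 12 / ((β - α) * (α + (1 - β)) ^ 2) + 1
  refine ⟨c ^ 2 * (1 + 1 / (β - α)) + 1, by positivity, fun θ _ w w' hw hqp horth => ?_⟩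
  set L := ∫ y in Ioo (0:ℝ) α ∪ Ioo β 1, ‖w' y‖
  set K := ∫ y in Ioo (0:ℝ) α ∪ Ioo β 1, ‖w' y‖ ^ 2
  obtain ⟨hJ, hI₀⟩ := OrthogonalToV.norm_integrals_le hα.le hαβ hβ horth hw hqp
  have hLK : L ^ 2 ≤ K := hw.sq_setIntegral_Q₁_norm_le hα.le hαβ.le hβ.le
  have hd : 0 < β - α := sub_pos.2 hαβ
  rw [tripleNormSq, integral_Ioo_zero_one_eq hα.le hαβ.le hβ.le hw.1.norm.integrable_sq,
    OrthogonalToV.setIntegral_Q₀_norm_sq hα.le hαβ.le hβ.le horth hw]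
  calc _ ≤ (c * L) ^ 2 + (K + (c * L) ^ 2 / (β - α)) := by gcongr
    _ ≤ c ^ 2 * K + (K + c ^ 2 * K / (β - α)) := by rw [mul_pow]; gcongr
    _ = _ := by ring

end
end

section
/- Let N ≥ 1 and 0 ≤ j ≤ N − 1 be integers and set θ = j/N. Let p : ℝ → ℝ be 1-periodic and measurable with 0 < p_min ≤ p ≤ p_max almost everywhere, let λ ∈ ℝ, and let v be locally H¹ on ℝ with v(y + 1) = e^{2πiθ}v(y) for all y, satisfying ∫₀¹ χ₀ p v' conj(Φ') = λ ∫₀¹ v conj(Φ) for every locally H¹ function Φ with Φ(y + 1) = e^{2πiθ}Φ(y) for all y and Φ' = 0 almost everywhere on F₁. Then for every locally H¹ N-periodic function φ with φ' = 0 almost everywhere on F₁, one has ∫₀ᴺ χ₀ p v' conj(φ') = λ ∫₀ᴺ v conj(φ). (Thus every θ-quasiperiodic Bloch eigenfunction with θ = j/N is an eigenfunction of the N-periodic operator A_N with the same eigenvalue.) -/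
open MeasureTheory Real Set
open scoped ComplexConjugate

noncomputable section

/-- `u` is locally `H¹` on `ℝ` with (weak) derivative `u'`: `u'` is locally
square-integrable and `u x = u 0 + ∫₀ˣ u'` for all `x`. -/
def IsH1Loc (u u' : ℝ → ℂ) : Prop :=
  AEStronglyMeasurable u' volume ∧
  (∀ a b : ℝ, IntervalIntegrable (fun t => ‖u' t‖ ^ 2) volume a b) ∧
  ∀ x : ℝ, u x = u 0 + ∫ t in (0:ℝ)..x, u' t

/-- The periodic "soft" component `F₀ = ∪ₙ (n+α, n+β)`. -/
def F0 (α β : ℝ) : Set ℝ := ⋃ n : ℤ, Ioo ((n : ℝ) + α) ((n : ℝ) + β)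

/-- The periodic "stiff" component `F₁ = ∪ₙ ((n, n+α) ∪ (n+β, n+1))`. -/
def F1 (α β : ℝ) : Set ℝ :=
  ⋃ n : ℤ, (Ioo (n : ℝ) ((n : ℝ) + α) ∪ Ioo ((n : ℝ) + β) ((n : ℝ) + 1))

/-!
Given an `N`-periodic test function `φ`, put `e = exp (2πiθ)`, so `e ^ N = 1` and `|e| = 1`. The
Bloch sum `Φ = ∑_{k<N} ē ^ k φ(· + k)` is `θ`-quasiperiodic and `Φ'` still vanishes a.e. on `F₁`,
so `Φ` is an admissible test function for the Bloch problem. Cutting `(0, N)` into unit cells and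
translating each back to `(0, 1)`, the quasiperiodicity of `v`, and a.e. of `v'` (weak derivatives
are unique), turns both `N`-periodic forms tested against `φ` into the forms on `(0, 1)` tested
against `Φ`.
-/

open scoped Interval

theorem locallyIntegrable_of_intervalIntegrable {E : Type*} [NormedAddCommGroup E] {f : ℝ → E}
    (hf : ∀ a b : ℝ, IntervalIntegrable f volume a b) : LocallyIntegrable f volume := fun x =>
  ⟨Icc (x - 1) (x + 1), Icc_mem_nhds (by linarith) (by linarith),
    (intervalIntegrable_iff_integrableOn_Icc_of_le (by linarith)).1 (hf _ _)⟩

namespace IsH1Loc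

variable {u u' w w' : ℝ → ℂ}

theorem of_memLp (hm : AEStronglyMeasurable u' volume)
    (h2 : ∀ a b : ℝ, MemLp u' 2 (volume.restrict (Ι a b)))
    (hu : ∀ x : ℝ, u x = u 0 + ∫ t in (0:ℝ)..x, u' t) : IsH1Loc u u' :=
  ⟨hm, fun a b =>
    intervalIntegrable_iff.2 ((memLp_two_iff_integrable_sq_norm hm.restrict).1 (h2 a b)), hu⟩

theorem memLp (h : IsH1Loc u u') (a b : ℝ) : MemLp u' 2 (volume.restrict (Ι a b)) :=
  (memLp_two_iff_integrable_sq_norm h.1.restrict).2 (intervalIntegrable_iff.1 (h.2.1 a b))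

theorem intervalIntegrable (h : IsH1Loc u u') (a b : ℝ) : IntervalIntegrable u' volume a b :=
  have : IsFiniteMeasure (volume.restrict (Ι a b)) := isFiniteMeasure_restrict.2 (by simp)
  intervalIntegrable_iff.2 ((h.memLp a b).integrable one_le_two)

theorem integral_eq_sub (h : IsH1Loc u u') (a b : ℝ) : ∫ t in a..b, u' t = u b - u a := by
  rw [h.2.2 a, h.2.2 b, ← intervalIntegral.integral_interval_sub_left (h.intervalIntegrable 0 b)
    (h.intervalIntegrable 0 a)]
  ring

theorem continuous (h : IsH1Loc u u') : Continuous u :=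
  (continuous_const.add (intervalIntegral.continuous_primitive h.intervalIntegrable 0)).congr
    fun x => (h.2.2 x).symm

theorem ae_eq (hu : IsH1Loc u u') (hw : IsH1Loc u w') : u' =ᵐ[volume] w' := by
  filter_upwards [LocallyIntegrable.ae_hasDerivAt_integral
      (locallyIntegrable_of_intervalIntegrable hu.intervalIntegrable),
    LocallyIntegrable.ae_hasDerivAt_integral
      (locallyIntegrable_of_intervalIntegrable hw.intervalIntegrable)]
    with x hux hwx
  refine (hux 0).unique ?_
  convert hwx 0 using 1
  funext y
  rw [hu.integral_eq_sub, hw.integral_eq_sub]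

theorem const_mul (h : IsH1Loc u u') (c : ℂ) : IsH1Loc (fun y => c * u y) (fun y => c * u' y) :=
  of_memLp (aestronglyMeasurable_const.mul h.1) (fun a b => (h.memLp a b).const_mul c) fun x => by
    rw [intervalIntegral.integral_const_mul, ← mul_add, ← h.2.2 x]

theorem add (hu : IsH1Loc u u') (hw : IsH1Loc w w') :
    IsH1Loc (fun y => u y + w y) (fun y => u' y + w' y) :=
  of_memLp (hu.1.add hw.1) (fun a b => (hu.memLp a b).add (hw.memLp a b)) fun x => by
    rw [intervalIntegral.integral_add (hu.intervalIntegrable 0 x) (hw.intervalIntegrable 0 x),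
      hu.2.2 x, hw.2.2 x]
    ring

theorem zero : IsH1Loc (fun _ => 0) (fun _ => 0) :=
  of_memLp aestronglyMeasurable_const (fun _ _ => MemLp.zero) fun _ => by simp

theorem finset_sum {ι : Type*} (s : Finset ι) {f f' : ι → ℝ → ℂ}
    (h : ∀ i ∈ s, IsH1Loc (f i) (f' i)) :
    IsH1Loc (fun y => ∑ i ∈ s, f i y) (fun y => ∑ i ∈ s, f' i y) := by
  classical
  induction s using Finset.induction_on with
  | empty => simpa using zero
  | insert a s has ih =>
    simp only [Finset.sum_insert has]
    exact (h a (s.mem_insert_self a)).add (ih fun i hi => h i (Finset.mem_insert_of_mem hi))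

theorem comp_add_right (h : IsH1Loc u u') (c : ℝ) :
    IsH1Loc (fun y => u (y + c)) (fun y => u' (y + c)) := by
  refine ⟨h.1.comp_quasiMeasurePreserving
      (measurePreserving_add_right volume c).quasiMeasurePreserving, fun a b => ?_, fun x => ?_⟩
  · simpa using (h.2.1 (a + c) (b + c)).comp_add_right c
  · rw [intervalIntegral.integral_comp_add_right, zero_add, h.integral_eq_sub]
    simp only [zero_add, add_sub_cancel]

theorem memLp_indicator_mul (h : IsH1Loc u u') {s : Set ℝ}
    (hs : MeasurableSet s) {p : ℝ → ℝ} (hpm : Measurable p) {C : ℝ} (hpC : ∀ᵐ y, |p y| ≤ C)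
    (a b : ℝ) :
    MemLp (fun x => s.indicator (fun z => (p z : ℂ)) x * u' x) 2 (volume.restrict (Ι a b)) :=
  (h.memLp a b).mul (memLp_top_of_bound
    ((Complex.measurable_ofReal.comp hpm).indicator hs).aestronglyMeasurable C
    (ae_restrict_of_ae (hpC.mono fun y hy =>
      (norm_indicator_le_norm_self _ _).trans (by simpa using hy))))

theorem intervalIntegrable_mul_conj {F : ℝ → ℂ} (hw : IsH1Loc w w')
    (hF : ∀ a b : ℝ, MemLp F 2 (volume.restrict (Ι a b))) (a b : ℝ) :
    IntervalIntegrable (fun x => F x * conj (w' x)) volume a b :=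
  intervalIntegrable_iff.2 ((hF a b).integrable_mul (hw.memLp a b).star)

end IsH1Loc

theorem add_int_mem_F0_iff {α β y : ℝ} (m : ℤ) : y + m ∈ F0 α β ↔ y ∈ F0 α β := by
  simp only [F0, mem_iUnion, mem_Ioo]
  refine ⟨fun ⟨n, h⟩ => ⟨n - m, ?_⟩, fun ⟨n, h⟩ => ⟨n + m, ?_⟩⟩ <;> push_cast <;>
    constructor <;> linarith [h.1, h.2]

theorem add_int_mem_F1_iff {α β y : ℝ} (m : ℤ) : y + m ∈ F1 α β ↔ y ∈ F1 α β := by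
  simp only [F1, mem_iUnion, mem_union, mem_Ioo]
  refine ⟨fun ⟨n, h⟩ => ⟨n - m, ?_⟩, fun ⟨n, h⟩ => ⟨n + m, ?_⟩⟩ <;> push_cast <;>
    rcases h with h | h <;> [left; right; left; right] <;> constructor <;> linarith [h.1, h.2]

theorem measurableSet_F0 (α β : ℝ) : MeasurableSet (F0 α β) :=
  MeasurableSet.iUnion fun _ => measurableSet_Ioo

theorem Function.Periodic.indicator_F0 {M : Type*} [Zero M] {α β : ℝ} {f : ℝ → M}
    (hf : Function.Periodic f 1) :
    Function.Periodic ((F0 α β).indicator f) 1 := fun y => by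
  have hmem : y + 1 ∈ F0 α β ↔ y ∈ F0 α β := by exact_mod_cast add_int_mem_F0_iff 1
  by_cases hy : y ∈ F0 α β
  · rw [indicator_of_mem (hmem.2 hy), indicator_of_mem hy, hf]
  · rw [indicator_of_notMem (mt hmem.1 hy), indicator_of_notMem hy]

theorem add_nat_eq_pow_mul {M : Type*} [Monoid M] {f : ℝ → M} {c : M}
    (hf : ∀ y, f (y + 1) = c * f y) (k : ℕ) (y : ℝ) : f (y + k) = c ^ k * f y := by
  induction k with
  | zero => simp
  | succ k ih => rw [Nat.cast_succ, ← add_assoc, hf, ih, pow_succ', mul_assoc]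

theorem IsH1Loc.ae_add_nat_eq_pow_mul {u u' : ℝ → ℂ} {c : ℂ} (h : IsH1Loc u u')
    (hu : ∀ y, u (y + 1) = c * u y) (k : ℕ) : ∀ᵐ y, u' (y + k) = c ^ k * u' y := by
  have hshift := h.comp_add_right k
  rw [funext (add_nat_eq_pow_mul hu k)] at hshift
  exact hshift.ae_eq (h.const_mul _)

def blochSum (c : ℂ) (N : ℕ) (φ : ℝ → ℂ) (y : ℝ) : ℂ :=
  ∑ k ∈ Finset.range N, c ^ k * φ (y + k)

theorem IsH1Loc.blochSum {φ φ' : ℝ → ℂ} (h : IsH1Loc φ φ') (c : ℂ) (N : ℕ) :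
    IsH1Loc (blochSum c N φ) (blochSum c N φ') :=
  IsH1Loc.finset_sum _ fun k _ => (h.comp_add_right k).const_mul _

theorem blochSum_add_one {c e : ℂ} {N : ℕ} {φ : ℝ → ℂ} (hec : e * c = 1) (hc : c ^ N = 1)
    (hφ : ∀ y, φ (y + N) = φ y) (y : ℝ) : blochSum c N φ (y + 1) = e * blochSum c N φ y := by
  -- shifting the index `k ↦ k + 1` is harmless: the new term `k = N` equals the lost term `k = 0`
  have hsum := (Finset.sum_range_succ' (fun k => c ^ k * φ (y + k)) N).symm.trans
    (Finset.sum_range_succ (fun k => c ^ k * φ (y + k)) N)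
  simp only [Nat.cast_zero, add_zero, pow_zero, one_mul, hc, hφ, add_left_inj] at hsum
  rw [blochSum, blochSum, ← hsum, Finset.mul_sum]
  refine Finset.sum_congr rfl fun k _ => ?_
  rw [pow_succ', ← mul_assoc, ← mul_assoc, hec, one_mul]
  push_cast
  ring_nf

theorem ae_mem_F1_imp_blochSum_eq_zero {α β : ℝ} {φ' : ℝ → ℂ}
    (h : ∀ᵐ y, y ∈ F1 α β → φ' y = 0) (c : ℂ) (N : ℕ) :
    ∀ᵐ y, y ∈ F1 α β → blochSum c N φ' y = 0 := by
  have hshift (k : ℕ) : ∀ᵐ y, y ∈ F1 α β → φ' (y + k) = 0 := by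
    filter_upwards [(measurePreserving_add_right volume (k : ℝ)).quasiMeasurePreserving.ae h]
      with y hy hyF1
    exact hy (by exact_mod_cast (add_int_mem_F1_iff k).2 hyF1)
  filter_upwards [ae_all_iff.2 hshift] with y hy hyF1
  exact Finset.sum_eq_zero fun k _ => by rw [hy k hyF1, mul_zero]

theorem intervalIntegral_mul_conj_eq_blochSum {F φ : ℝ → ℂ} {e : ℂ} {N : ℕ}
    (hF : ∀ k : ℕ, ∀ᵐ x, F (x + k) = e ^ k * F x)
    (hFφ : ∀ k : ℕ, IntervalIntegrable (fun x => F x * conj (φ x)) volume k (k + 1))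
    (hFφk : ∀ k : ℕ, IntervalIntegrable (fun x => F x * conj (φ (x + k))) volume 0 1) :
    ∫ x in (0:ℝ)..N, F x * conj (φ x) =
      ∫ x in (0:ℝ)..1, F x * conj (blochSum (conj e) N φ x) := by
  have hpiece (k : ℕ) : ∫ x in (k:ℝ)..k + 1, F x * conj (φ x) =
      ∫ x in (0:ℝ)..1, e ^ k * (F x * conj (φ (x + k))) := by
    have hshift := intervalIntegral.integral_comp_add_right (fun x => F x * conj (φ x)) (k : ℝ)
      (a := 0) (b := 1)
    rw [zero_add, add_comm 1] at hshift
    rw [← hshift]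
    refine intervalIntegral.integral_congr_ae ?_
    filter_upwards [hF k] with x hx _
    rw [hx, mul_assoc]
  calc ∫ x in (0:ℝ)..N, F x * conj (φ x)
      = ∑ k ∈ Finset.range N, ∫ x in (k:ℝ)..k + 1, F x * conj (φ x) := by
        simpa using (intervalIntegral.sum_integral_adjacent_intervals
          (a := fun k : ℕ => (k : ℝ)) fun k _ => by simpa using hFφ k).symm
    _ = ∫ x in (0:ℝ)..1, ∑ k ∈ Finset.range N, e ^ k * (F x * conj (φ (x + k))) := by
        rw [intervalIntegral.integral_finsetSum fun k _ => (hFφk k).const_mul _]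
        exact Finset.sum_congr rfl fun k _ => hpiece k
    _ = ∫ x in (0:ℝ)..1, F x * conj (blochSum (conj e) N φ x) := by
        simp only [blochSum, map_sum, map_mul, map_pow, Complex.conj_conj, Finset.mul_sum]
        ring_nf

theorem exp_two_pi_mul_I_mul_div_pow_self (j N : ℕ) :
    Complex.exp (2 * π * Complex.I * ((j / N : ℝ) : ℂ)) ^ N = 1 := by
  rcases Nat.eq_zero_or_pos N with rfl | hN
  · exact pow_zero _
  rw [← Complex.exp_nat_mul, ← Complex.exp_nat_mul_two_pi_mul_I j]
  congr 1
  have hN' : (N : ℂ) ≠ 0 := by exact_mod_cast hN.ne'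
  push_cast
  field_simp

theorem exp_two_pi_mul_I_mul_conj (θ : ℝ) :
    Complex.exp (2 * π * Complex.I * θ) * conj (Complex.exp (2 * π * Complex.I * θ)) = 1 := by
  rw [Complex.mul_conj, Complex.normSq_eq_norm_sq, Complex.norm_exp]
  simp

theorem stmt_11_general (α β : ℝ)
    (N : ℕ) (j : ℕ) (θ : ℝ) (hθ : θ = (j : ℝ) / N)
    (p : ℝ → ℝ) (hpm : Measurable p) (hpper : ∀ y : ℝ, p (y + 1) = p y)
    (pmin pmax : ℝ)
    (hp : ∀ᵐ y ∂volume, pmin ≤ p y ∧ p y ≤ pmax)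
    (lam : ℝ)
    (v v' : ℝ → ℂ) (hv : IsH1Loc v v')
    (hvq : ∀ y : ℝ, v (y + 1) = Complex.exp (2 * Real.pi * Complex.I * θ) * v y)
    (heig : ∀ Φ Φ' : ℝ → ℂ, IsH1Loc Φ Φ' →
      (∀ y : ℝ, Φ (y + 1) = Complex.exp (2 * Real.pi * Complex.I * θ) * Φ y) →
      (∀ᵐ y ∂volume, y ∈ F1 α β → Φ' y = 0) →
      (∫ y in Ioo (0:ℝ) 1,
          (F0 α β).indicator (fun z => (p z : ℂ) * v' z * conj (Φ' z)) y) =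
        (lam : ℂ) * ∫ y in Ioo (0:ℝ) 1, v y * conj (Φ y)) :
    ∀ φ φ' : ℝ → ℂ, IsH1Loc φ φ' →
      (∀ y : ℝ, φ (y + N) = φ y) →
      (∀ᵐ y ∂volume, y ∈ F1 α β → φ' y = 0) →
      (∫ y in Ioo (0:ℝ) (N : ℝ),
          (F0 α β).indicator (fun z => (p z : ℂ) * v' z * conj (φ' z)) y) =
        (lam : ℂ) * ∫ y in Ioo (0:ℝ) (N : ℝ), v y * conj (φ y) := by
  intro φ φ' hφ hφper hφF1
  set e := Complex.exp (2 * π * Complex.I * θ) with he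
  have hcN : conj e ^ N = 1 := by
    rw [← map_pow, he, hθ, exp_two_pi_mul_I_mul_div_pow_self, map_one]
  have key := heig _ _ (hφ.blochSum (conj e) N)
    (blochSum_add_one (exp_two_pi_mul_I_mul_conj θ) hcN hφper)
    (ae_mem_F1_imp_blochSum_eq_zero hφF1 _ N)
  set χp := (F0 α β).indicator fun z => (p z : ℂ)
  have hχp : Function.Periodic χp 1 := Function.Periodic.indicator_F0 fun y => by rw [hpper]
  have hF2 := hv.memLp_indicator_mul (measurableSet_F0 α β) hpm
    (hp.mono fun y hy => abs_le_max_abs_abs hy.1 hy.2)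
  have hFq (k : ℕ) : ∀ᵐ x, χp (x + k) * v' (x + k) = e ^ k * (χp x * v' x) := by
    filter_upwards [hv.ae_add_nat_eq_pow_mul hvq k] with x hx
    rw [hx, ← mul_one (k : ℝ), hχp.nat_mul k x]
    ring
  have hvφ (c : ℝ) : Continuous fun x => v x * conj (φ (x + c)) :=
    hv.continuous.mul (Complex.continuous_conj.comp (hφ.comp_add_right c).continuous)
  simp only [← integral_Ioc_eq_integral_Ioo, ← intervalIntegral.integral_of_le zero_le_one,
    ← intervalIntegral.integral_of_le (Nat.cast_nonneg N), indicator_mul_left] at key ⊢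
  rw [intervalIntegral_mul_conj_eq_blochSum hFq
      (fun k => hφ.intervalIntegrable_mul_conj hF2 _ _)
      (fun k => (hφ.comp_add_right k).intervalIntegrable_mul_conj hF2 _ _),
    intervalIntegral_mul_conj_eq_blochSum (fun k => ae_of_all _ (add_nat_eq_pow_mul hvq k))
      (fun k => by simpa using (hvφ 0).intervalIntegrable _ _)
      (fun k => (hvφ k).intervalIntegrable _ _)]
  exact key

theorem stmt_11 (α β : ℝ) (hα : 0 < α) (hαβ : α < β) (hβ : β < 1)
    (N : ℕ) (hN : 1 ≤ N) (j : ℕ) (hj : j ≤ N - 1) (θ : ℝ) (hθ : θ = (j : ℝ) / N)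
    (p : ℝ → ℝ) (hpm : Measurable p) (hpper : ∀ y : ℝ, p (y + 1) = p y)
    (pmin pmax : ℝ) (hpmin : 0 < pmin)
    (hp : ∀ᵐ y ∂volume, pmin ≤ p y ∧ p y ≤ pmax)
    (lam : ℝ)
    (v v' : ℝ → ℂ) (hv : IsH1Loc v v')
    (hvq : ∀ y : ℝ, v (y + 1) = Complex.exp (2 * Real.pi * Complex.I * θ) * v y)
    (heig : ∀ Φ Φ' : ℝ → ℂ, IsH1Loc Φ Φ' →
      (∀ y : ℝ, Φ (y + 1) = Complex.exp (2 * Real.pi * Complex.I * θ) * Φ y) →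
      (∀ᵐ y ∂volume, y ∈ F1 α β → Φ' y = 0) →
      (∫ y in Ioo (0:ℝ) 1,
          (F0 α β).indicator (fun z => (p z : ℂ) * v' z * conj (Φ' z)) y) =
        (lam : ℂ) * ∫ y in Ioo (0:ℝ) 1, v y * conj (Φ y)) :
    ∀ φ φ' : ℝ → ℂ, IsH1Loc φ φ' →
      (∀ y : ℝ, φ (y + N) = φ y) →
      (∀ᵐ y ∂volume, y ∈ F1 α β → φ' y = 0) →
      (∫ y in Ioo (0:ℝ) (N : ℝ),
          (F0 α β).indicator (fun z => (p z : ℂ) * v' z * conj (φ' z)) y) =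
        (lam : ℂ) * ∫ y in Ioo (0:ℝ) (N : ℝ), v y * conj (φ y) :=
  stmt_11_general α β N j θ hθ p hpm hpper pmin pmax hp lam v v' hv hvq heig
end
end
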